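/- For every prime power q and every integer n ≥ 4, for all isotropic vectors x, y ∈ F^n with ⟨x,y⟩ ≠ 0, the number of isotropic vectors z ∈ F^n such that ⟨x,z⟩ = 0 with z not a scalar multiple of x, and ⟨z,y⟩ = 0 with y not a scalar multiple of z, equals (q^{n−2} − (−1)^{n−2})(q^{n−3} − (−1)^{n−3}), i.e., |Φ(n−2,q)|. -/

import Mathlib

open Matrix

/-- The Hermitian inner product `⟨x,y⟩ = ∑ i, x i * (y i)^q` of row vectors over a field of
order `q^2`. -/
def herm (q : ℕ) {n : ℕ} {F : Type*} [Field F] (x y : Fin n → F) : F :=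
  ∑ i, x i * (y i) ^ q

/-- `x` is an isotropic vector: nonzero with `⟨x,x⟩ = 0`. -/
def Isotropic (q : ℕ) {n : ℕ} {F : Type*} [Field F] (x : Fin n → F) : Prop :=
  x ≠ 0 ∧ herm q x x = 0

section AuxLemmas

set_option linter.unusedSectionVars false
set_option maxHeartbeats 1600000
open Finset Polynomial

variable {F : Type*} [Field F] [Fintype F] [DecidableEq F] {q : ℕ}

lemma exists_conj_hom (hq : IsPrimePow q) (hF : Fintype.card F = q^2) :
    ∃ φ : F →+* F, ∀ a, φ a = a ^ q := by
  obtain ⟨p, k, pp, hk, rfl⟩ := hq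
  have pp' := pp.nat_prime
  haveI : Fact (Nat.Prime p) := ⟨pp'⟩
  have hrp : (ringChar F).Prime := CharP.char_is_prime F (ringChar F)
  have hc : CharP F p := by
    obtain ⟨m, _, hm⟩ := FiniteField.card F (ringChar F)
    rw [hm] at hF
    have h1 : p ∣ (ringChar F) ^ (m : ℕ) := by
      rw [hF]; exact dvd_pow (dvd_pow_self p hk.ne') (by norm_num)
    have : p = ringChar F :=
      (Nat.prime_dvd_prime_iff_eq pp' hrp).mp (pp'.dvd_of_dvd_pow h1)
    rw [this]; exact ringChar.charP F
  exact ⟨iterateFrobenius F p k, fun a => iterateFrobenius_def p k a⟩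

lemma pow_q_q (hF : Fintype.card F = q^2) (a : F) : (a ^ q) ^ q = a := by
  rw [← pow_mul, ← sq, ← hF, FiniteField.pow_card]

lemma ndeg1 (hq2 : 2 ≤ q) : ((X:F[X])^q - X).natDegree = q := by
  compute_degree!
  · rw [if_neg (by omega)]; norm_num
  · omega

lemma ndeg2 (hq2 : 2 ≤ q) : ((X:F[X])^q + X).natDegree = q := by
  compute_degree!
  · rw [if_neg (by omega)]; norm_num
  · omega

lemma ndeg3 : ((X:F[X])^(q+1) - C 1).natDegree = q+1 := by compute_degree!

lemma ndeg4 (hq2 : 2 ≤ q) : ((X:F[X])^(q-1) - C 1).natDegree = q-1 := by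
  compute_degree!
  rw [if_neg (by omega)]; norm_num

lemma nz_of_ndeg {f : F[X]} {d : ℕ} (h : f.natDegree = d) (hd : 0 < d) : f ≠ 0 := by
  intro h0; rw [h0] at h; simp at h; omega

lemma card_filter_le_natDegree (P : F → Prop) [DecidablePred P] (f : F[X]) (hf : f ≠ 0)
    (h : ∀ t, P t → f.eval t = 0) :
    (univ.filter P).card ≤ f.natDegree := by
  have hsub : univ.filter P ⊆ f.roots.toFinset := by
    intro t ht
    simp only [mem_filter] at ht
    simp [Multiset.mem_toFinset, mem_roots, hf, IsRoot, h t ht.2]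
  calc (univ.filter P).card ≤ f.roots.toFinset.card := card_le_card hsub
    _ ≤ Multiset.card f.roots := f.roots.toFinset_card_le
    _ ≤ f.natDegree := f.card_roots'

/-- set of elements fixed by `a ↦ a^q` has at most `q` elements -/
lemma card_K_le (hq2 : 2 ≤ q) : (univ.filter fun t : F => t^q = t).card ≤ q := by
  have := card_filter_le_natDegree (fun t : F => t^q = t) ((X:F[X])^q - X)
    (nz_of_ndeg (ndeg1 hq2) (by omega)) (fun t ht => by simp [ht])
  rwa [ndeg1 hq2] at this

/-- fibers of the relative trace `t ↦ t + t^q`. -/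
lemma trace_fiber (hq2 : 2 ≤ q) (hF : Fintype.card F = q^2)
    (φ : F →+* F) (hφ : ∀ a : F, φ a = a ^ q) (c : F) (hc : c^q = c) :
    (univ.filter fun t : F => t + t^q = c).card = q := by
  have hqq : ∀ a : F, (a^q)^q = a := pow_q_q hF
  set τ : F → F := fun t => t + t^q with hτ
  have hadd : ∀ a b : F, τ (a + b) = τ a + τ b := by
    intro a b
    simp only [hτ, ← hφ, map_add]; ring
  have hsub : ∀ a b : F, τ (a - b) = τ a - τ b := by
    intro a b
    simp only [hτ, ← hφ, map_sub]; ring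
  have hfib : ∀ c₀ t₀ : F, τ t₀ = c₀ →
      (univ.filter fun t => τ t = c₀).card = (univ.filter fun t => τ t = 0).card := by
    intro c₀ t₀ h₀
    apply card_nbij' (fun t => t - t₀) (fun s => s + t₀)
    · intro a ha
      simp only [Finset.mem_coe, mem_filter, mem_univ, true_and] at ha ⊢
      rw [hsub, ha, h₀, sub_self]
    · intro a ha
      simp only [Finset.mem_coe, mem_filter, mem_univ, true_and] at ha ⊢
      rw [hadd, ha, h₀, zero_add]
    · intro a _; simp
    · intro a _; simp
  have hker : (univ.filter fun t : F => τ t = 0).card ≤ q := by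
    have := card_filter_le_natDegree (fun t : F => τ t = 0) ((X:F[X])^q + X)
      (nz_of_ndeg (ndeg2 hq2) (by omega)) (fun t ht => by
        simp only [hτ] at ht; simp [ht]; linear_combination ht)
    rwa [ndeg2 hq2] at this
  have himg : univ.image τ ⊆ univ.filter fun t : F => t^q = t := by
    intro c₀ hc₀
    simp only [mem_image] at hc₀
    obtain ⟨t, _, rfl⟩ := hc₀
    simp only [mem_filter, mem_univ, true_and, hτ]
    rw [← hφ, map_add, hφ, hφ, hqq]; ring
  have hm : (univ.image τ).card ≤ q := le_trans (card_le_card himg) (card_K_le hq2)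
  have htot : q^2 = (univ.image τ).card * (univ.filter fun t : F => τ t = 0).card := by
    have h1 : (univ : Finset F).card = ∑ c₀ ∈ univ.image τ,
        (univ.filter fun t => τ t = c₀).card := card_eq_sum_card_fiberwise (by
      intro t _; exact mem_image_of_mem τ (mem_univ t))
    rw [← hF, ← Finset.card_univ, h1]
    rw [Finset.sum_congr rfl (fun c₀ hc₀ => by
      obtain ⟨t₀, _, h₀⟩ := mem_image.mp hc₀
      exact hfib c₀ t₀ h₀), Finset.sum_const, smul_eq_mul]
  have hk : (univ.filter fun t : F => τ t = 0).card = q := by nlinarith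
  have hmq : (univ.image τ).card = q := by nlinarith
  have himg_eq : univ.image τ = univ.filter fun t : F => t^q = t :=
    Finset.eq_of_subset_of_card_le himg (by rw [hmq]; exact card_K_le hq2)
  have hcmem : c ∈ univ.image τ := by
    rw [himg_eq]; simp [hc]
  obtain ⟨t₀, _, h₀⟩ := mem_image.mp hcmem
  rw [hfib c t₀ h₀, hk]

lemma norm_fiber_zero : (univ.filter fun t : F => t * t^q = 0).card = 1 := by
  have : (univ.filter fun t : F => t * t^q = 0) = {0} := by
    ext t
    simp only [mem_filter, mem_univ, true_and, mem_singleton, mul_eq_zero, pow_eq_zero_iff',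
      or_self_left]
    tauto
  rw [this, card_singleton]

/-- fibers of the norm `t ↦ t * t^q` over nonzero `c` with `c^q = c`. -/
lemma norm_fiber (hq2 : 2 ≤ q) (hF : Fintype.card F = q^2)
    (c : F) (hc : c^q = c) (hc0 : c ≠ 0) :
    (univ.filter fun t : F => t * t^q = c).card = q + 1 := by
  have hqq : ∀ a : F, (a^q)^q = a := pow_q_q hF
  set ν : F → F := fun t => t * t^q with hν
  have hmul : ∀ a b : F, ν (a * b) = ν a * ν b := by
    intro a b; simp only [hν, mul_pow]; ring
  have hν1 : ν 1 = 1 := by simp [hν]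
  have hinv : ∀ a : F, a ≠ 0 → ν a⁻¹ = (ν a)⁻¹ := by
    intro a ha
    have h1 : ν a⁻¹ * ν a = 1 := by rw [← hmul, inv_mul_cancel₀ ha, hν1]
    exact eq_inv_of_mul_eq_one_left h1
  have hν0 : ∀ a : F, a ≠ 0 → ν a ≠ 0 := fun a ha => by simp [hν, ha]
  set S : Finset F := univ.filter (fun t : F => t ≠ 0) with hS
  have hScard : S.card = q^2 - 1 := by
    rw [hS, filter_ne' univ 0, card_erase_of_mem (mem_univ 0), Finset.card_univ, hF]
  have hfib : ∀ c₀ t₀ : F, t₀ ≠ 0 → ν t₀ = c₀ →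
      (S.filter fun t => ν t = c₀).card = (S.filter fun t => ν t = 1).card := by
    intro c₀ t₀ ht₀ h₀
    apply card_nbij' (fun t => t * t₀⁻¹) (fun s => s * t₀)
    · intro a ha
      simp only [Finset.mem_coe, hS, mem_filter, mem_univ, true_and] at ha ⊢
      refine ⟨mul_ne_zero ha.1 (inv_ne_zero ht₀), ?_⟩
      rw [hmul, hinv _ ht₀, ha.2, h₀, mul_inv_cancel₀ (h₀ ▸ hν0 t₀ ht₀)]
    · intro a ha
      simp only [Finset.mem_coe, hS, mem_filter, mem_univ, true_and] at ha ⊢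
      refine ⟨mul_ne_zero ha.1 ht₀, ?_⟩
      rw [hmul, ha.2, h₀, one_mul]
    · intro a ha
      field_simp
    · intro a ha
      field_simp
  have hker : (S.filter fun t => ν t = 1).card ≤ q + 1 := by
    have h1 : (S.filter fun t => ν t = 1) ⊆ univ.filter (fun t : F => ν t = 1) := by
      intro t ht; simp only [hS, mem_filter, mem_univ, true_and] at ht ⊢; exact ht.2
    have h2 := card_filter_le_natDegree (fun t : F => ν t = 1) ((X:F[X])^(q+1) - C 1)
      (nz_of_ndeg ndeg3 (by omega)) (fun t ht => by
        simp only [hν] at ht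
        simp only [eval_sub, eval_pow, eval_X, eval_C, sub_eq_zero]
        rw [pow_succ]
        linear_combination ht)
    rw [ndeg3] at h2
    exact le_trans (card_le_card h1) h2
  set K' : Finset F := univ.filter (fun t : F => t^q = t ∧ t ≠ 0) with hK'
  have hK'card : K'.card ≤ q - 1 := by
    have := card_filter_le_natDegree (fun t : F => t^q = t ∧ t ≠ 0) ((X:F[X])^(q-1) - C 1)
      (nz_of_ndeg (ndeg4 hq2) (by omega)) (fun t ht => by
        have h3 : t^(q-1) * t = t^q := by
          rw [← pow_succ]; congr 1; omega
        simp only [eval_sub, eval_pow, eval_X, eval_C, sub_eq_zero]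
        have h4 : t^(q-1) * t = 1 * t := by rw [h3, ht.1, one_mul]
        exact mul_right_cancel₀ ht.2 h4)
    rwa [ndeg4 hq2] at this
  have himg : S.image ν ⊆ K' := by
    intro c₀ hc₀
    obtain ⟨t, ht, rfl⟩ := mem_image.mp hc₀
    simp only [hS, mem_filter, mem_univ, true_and] at ht
    simp only [hK', mem_filter, mem_univ, true_and]
    refine ⟨?_, hν0 t ht⟩
    simp only [hν, mul_pow, hqq]; ring
  have hm : (S.image ν).card ≤ q - 1 := le_trans (card_le_card himg) hK'card
  have htot : q^2 - 1 = (S.image ν).card * (S.filter fun t => ν t = 1).card := by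
    have h1 : S.card = ∑ c₀ ∈ S.image ν, (S.filter fun t => ν t = c₀).card :=
      card_eq_sum_card_fiberwise (fun t ht => mem_image_of_mem ν ht)
    rw [← hScard, h1]
    rw [Finset.sum_congr rfl (fun c₀ hc₀ => by
      obtain ⟨t₀, ht₀, h₀⟩ := mem_image.mp hc₀
      simp only [hS, mem_filter, mem_univ, true_and] at ht₀
      exact hfib c₀ t₀ ht₀ h₀), Finset.sum_const, smul_eq_mul]
  have e1 : q^2 - 1 = (q-1) * (q+1) := by
    cases q with
    | zero => omega
    | succ m => simp [Nat.succ_sub_one]; ring_nf; omega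
  rw [e1] at htot
  have h2 : (S.image ν).card * (S.filter fun t => ν t = 1).card
      ≤ (q-1) * (S.filter fun t => ν t = 1).card := Nat.mul_le_mul_right _ hm
  have h3 : (q-1) * (S.filter fun t => ν t = 1).card ≤ (q-1) * (q+1) :=
    Nat.mul_le_mul_left _ hker
  have h4 : (q-1) * (S.filter fun t => ν t = 1).card = (q-1)*(q+1) := le_antisymm h3 (by omega)
  have hq1 : (S.filter fun t => ν t = 1).card = q + 1 :=
    Nat.eq_of_mul_eq_mul_left (by omega) h4
  have hmq : (S.image ν).card = q - 1 := by
    rw [hq1] at htot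
    exact (Nat.eq_of_mul_eq_mul_right (by omega) htot.symm)
  have himg_eq : S.image ν = K' :=
    Finset.eq_of_subset_of_card_le himg (by rw [hmq]; exact hK'card)
  have hcmem : c ∈ S.image ν := by
    rw [himg_eq]; simp [hK', hc, hc0]
  obtain ⟨t₀, ht₀, h₀⟩ := mem_image.mp hcmem
  simp only [hS, mem_filter, mem_univ, true_and] at ht₀
  have : (univ.filter fun t : F => ν t = c) = (S.filter fun t => ν t = c) := by
    ext t
    simp only [hS, mem_filter, mem_univ, true_and]
    constructor
    · intro h; exact ⟨by rintro rfl; exact hc0 (by simpa [hν] using h.symm), h⟩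
    · exact fun h => h.2
  rw [show (univ.filter fun t : F => t * t^q = c) = (univ.filter fun t : F => ν t = c) from rfl,
    this, hfib c t₀ ht₀ h₀, hq1]

section hermlemmas
variable {n : ℕ}

lemma herm_add_left (x y z : Fin n → F) : herm q (x + y) z = herm q x z + herm q y z := by
  simp [herm, add_mul, sum_add_distrib]

lemma herm_sub_left (x y z : Fin n → F) : herm q (x - y) z = herm q x z - herm q y z := by
  simp [herm, sub_mul, Finset.sum_sub_distrib]

lemma herm_smul_left (c : F) (x z : Fin n → F) : herm q (c • x) z = c * herm q x z := by
  simp [herm, mul_sum, mul_assoc]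

lemma herm_add_right (φ : F →+* F) (hφ : ∀ a : F, φ a = a ^ q) (x y z : Fin n → F) :
    herm q z (x + y) = herm q z x + herm q z y := by
  have hadd : ∀ a b : F, (a+b)^q = a^q + b^q := fun a b => by
    rw [← hφ, ← hφ, ← hφ, map_add]
  simp only [herm, Pi.add_apply, hadd, mul_add, sum_add_distrib]

lemma herm_smul_right (c : F) (x z : Fin n → F) :
    herm q z (c • x) = c^q * herm q z x := by
  simp only [herm, Pi.smul_apply, smul_eq_mul, mul_pow, mul_sum]
  exact Finset.sum_congr rfl fun i _ => by ring

lemma herm_conj (φ : F →+* F) (hφ : ∀ a : F, φ a = a ^ q) (hF : Fintype.card F = q^2)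
    (x y : Fin n → F) :
    (herm q x y)^q = herm q y x := by
  rw [herm, ← hφ, map_sum]
  refine Finset.sum_congr rfl fun i _ => ?_
  rw [_root_.map_mul, hφ, hφ, pow_q_q hF]
  ring

lemma herm_cons (s t : F) (x y : Fin n → F) :
    herm q (Fin.cons s x) (Fin.cons t y) = s * t^q + herm q x y := by
  simp [herm, Fin.sum_univ_succ]

end hermlemmas

lemma count_herm (hq2 : 2 ≤ q) (hF : Fintype.card F = q^2)
    (φ : F →+* F) (hφ : ∀ a : F, φ a = a ^ q) (m : ℕ) (c : F) (hc : c^q = c) :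
    ((univ.filter fun x : Fin (m+1) → F => herm q x x = c).card : ℤ) =
      if c = 0 then (q:ℤ)^(2*m+1) + (-1)^(m+1) * (q:ℤ)^m * ((q:ℤ)-1)
      else (q:ℤ)^(2*m+1) - (-1)^(m+1) * (q:ℤ)^m := by
  have hqq : ∀ a : F, (a^q)^q = a := pow_q_q hF
  induction m generalizing c with
  | zero =>
    have hb : (univ.filter fun x : Fin 1 → F => herm q x x = c).card
        = (univ.filter fun t : F => t * t^q = c).card := by
      apply card_nbij' (fun x => x 0) (fun t _ => t)
      · intro a ha
        simp only [Finset.mem_coe, mem_filter, mem_univ, true_and] at ha ⊢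
        rw [← ha]; simp [herm]
      · intro a ha
        simp only [Finset.mem_coe, mem_filter, mem_univ, true_and] at ha ⊢
        rw [← ha]; simp [herm]
      · intro a _; ext i; simp [Fin.eq_zero i]
      · intro a _; simp
    rw [hb]
    by_cases h0 : c = 0
    · rw [if_pos h0, h0, norm_fiber_zero]
      push_cast; ring
    · rw [if_neg h0, norm_fiber hq2 hF c hc h0]
      push_cast; ring
  | succ m ih =>
    have key : (univ.filter fun z : Fin (m+2) → F => herm q z z = c).card
        = ∑ t : F, (univ.filter fun x : Fin (m+1) → F => herm q x x = c - t * t^q).card := by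
      rw [card_eq_sum_card_fiberwise (f := fun z : Fin (m+2) → F => z 0) (t := univ)
        (fun _ _ => mem_univ _)]
      refine sum_congr rfl fun t _ => ?_
      apply card_nbij' (fun z => Fin.tail z) (fun x => Fin.cons t x)
      · intro z hz
        simp only [Finset.mem_coe, mem_filter, mem_univ, true_and] at hz ⊢
        obtain ⟨h1, h2⟩ := hz
        have hz' : herm q (Fin.cons t (Fin.tail z)) (Fin.cons t (Fin.tail z)) = c := by
          rw [← h2, Fin.cons_self_tail]; exact h1
        rw [herm_cons] at hz'
        linear_combination hz'
      · intro x hx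
        simp only [Finset.mem_coe, mem_filter, mem_univ, true_and] at hx ⊢
        constructor
        · rw [herm_cons, hx]; ring
        · simp
      · intro z hz
        simp only [Finset.mem_coe, mem_filter, mem_univ, true_and] at hz
        dsimp only
        rw [← hz.2, Fin.cons_self_tail]
      · intro x _
        simp [Fin.tail_cons]
    rw [key]
    have hsplit := Finset.sum_filter_add_sum_filter_not (univ : Finset F)
      (fun t => t * t^q = c)
      (fun t => (univ.filter fun x : Fin (m+1) → F => herm q x x = c - t * t^q).card)
    set N : ℤ := (q:ℤ)^(2*m+1) + (-1)^(m+1) * (q:ℤ)^m * ((q:ℤ)-1) with hN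
    set M : ℤ := (q:ℤ)^(2*m+1) - (-1)^(m+1) * (q:ℤ)^m with hM
    have h1 : ∀ t ∈ univ.filter (fun t : F => t * t^q = c),
        ((univ.filter fun x : Fin (m+1) → F => herm q x x = c - t * t^q).card : ℤ) = N := by
      intro t ht
      simp only [mem_filter, mem_univ, true_and] at ht
      rw [ht, sub_self]
      have := ih 0 (zero_pow (by omega : q ≠ 0))
      rw [this, if_pos rfl]
    have h2 : ∀ t ∈ univ.filter (fun t : F => ¬ (t * t^q = c)),
        ((univ.filter fun x : Fin (m+1) → F => herm q x x = c - t * t^q).card : ℤ) = M := by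
      intro t ht
      simp only [mem_filter, mem_univ, true_and] at ht
      have hfix : (c - t * t^q)^q = c - t * t^q := by
        rw [← hφ, map_sub, hφ, hφ, hc, mul_pow, hqq]
        ring_nf
      have hne : c - t * t^q ≠ 0 := fun h => ht (by linear_combination -h)
      rw [ih _ hfix, if_neg hne]
    have hP : ((univ.filter fun t : F => t * t^q = c).card : ℤ)
        = if c = 0 then 1 else (q:ℤ) + 1 := by
      by_cases h0 : c = 0
      · rw [if_pos h0, h0, norm_fiber_zero]; norm_num
      · rw [if_neg h0, norm_fiber hq2 hF c hc h0]; push_cast; ring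
    have hQ : ((univ.filter fun t : F => ¬ (t * t^q = c)).card : ℤ)
        = (q:ℤ)^2 - (if c = 0 then 1 else (q:ℤ) + 1) := by
      have := Finset.card_filter_add_card_filter_not (s := (univ : Finset F))
        (p := fun t : F => t * t^q = c)
      rw [Finset.card_univ, hF] at this
      have := congrArg (Nat.cast : ℕ → ℤ) this
      push_cast at this
      rw [← hP]
      linarith
    have cast_sum : ((∑ t : F, (univ.filter fun x : Fin (m+1) → F =>
        herm q x x = c - t * t^q).card : ℕ) : ℤ)
        = (if c = 0 then 1 else (q:ℤ) + 1) * N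
          + ((q:ℤ)^2 - (if c = 0 then 1 else (q:ℤ) + 1)) * M := by
      rw [← hsplit]
      push_cast
      rw [Finset.sum_congr rfl h1, Finset.sum_congr rfl h2, Finset.sum_const, Finset.sum_const,
        nsmul_eq_mul, nsmul_eq_mul, hP, hQ]
    rw [cast_sum]
    by_cases h0 : c = 0
    · simp only [if_pos h0]
      rw [hN, hM]; ring
    · simp only [if_neg h0]
      rw [hN, hM]; ring

lemma pairs_card (hq2 : 2 ≤ q) (hF : Fintype.card F = q^2)
    (φ : F →+* F) (hφ : ∀ a : F, φ a = a ^ q)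
    (g : F) (hg : g ≠ 0) (d : F) (hd : d^q = d) :
    ((univ.filter fun ab : F × F =>
        ab.1 * ab.2^q * g + (ab.1 * ab.2^q * g)^q = d).card : ℤ)
      = (q:ℤ)^3 - q + (if d = 0 then (q:ℤ)^2 else 0) := by
  have hqq : ∀ a : F, (a^q)^q = a := pow_q_q hF
  have hq0 : q ≠ 0 := by omega
  have hstep : ((univ.filter fun ab : F × F =>
      ab.1 * ab.2^q * g + (ab.1 * ab.2^q * g)^q = d)).card
      = ∑ a : F, (univ.filter fun b : F => a * b^q * g + (a * b^q * g)^q = d).card := by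
    rw [card_eq_sum_card_fiberwise (f := fun ab : F × F => ab.1) (t := univ)
      (fun _ _ => mem_univ _)]
    refine sum_congr rfl fun a _ => ?_
    apply card_nbij' (fun ab => ab.2) (fun b => (a, b))
    · intro ab hab
      simp only [Finset.mem_coe, mem_filter, mem_univ, true_and] at hab ⊢
      obtain ⟨h1, h2⟩ := hab
      rw [← h2]; exact h1
    · intro b hb
      simp only [Finset.mem_coe, mem_filter, mem_univ, true_and] at hb ⊢
      exact ⟨hb, trivial⟩
    · intro ab hab
      simp only [Finset.mem_coe, mem_filter, mem_univ, true_and] at hab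
      exact Prod.ext hab.2.symm rfl
    · intro b _; rfl
  rw [hstep, ← Finset.add_sum_erase _ _ (mem_univ (0:F))]
  have h0 : (univ.filter fun b : F => (0:F) * b^q * g + ((0:F) * b^q * g)^q = d).card
      = if d = 0 then q^2 else 0 := by
    by_cases hd0 : d = 0
    · rw [if_pos hd0]
      have : (univ.filter fun b : F => (0:F) * b^q * g + ((0:F) * b^q * g)^q = d) = univ := by
        ext b; simp [hd0, zero_pow hq0]
      rw [this, Finset.card_univ, hF]
    · rw [if_neg hd0]
      have : (univ.filter fun b : F => (0:F) * b^q * g + ((0:F) * b^q * g)^q = d) = ∅ := by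
        ext b
        simp only [mem_filter, mem_univ, true_and, Finset.notMem_empty, iff_false]
        intro h
        apply hd0
        rw [← h]; simp [zero_pow hq0]
      rw [this, Finset.card_empty]
  have h1 : ∀ a ∈ univ.erase (0:F),
      (univ.filter fun b : F => a * b^q * g + (a * b^q * g)^q = d).card = q := by
    intro a ha
    have ha0 : a ≠ 0 := (Finset.mem_erase.mp ha).1
    have hbij : (univ.filter fun b : F => a * b^q * g + (a * b^q * g)^q = d).card
        = (univ.filter fun u : F => u + u^q = d).card := by
      apply card_nbij' (fun b => a * b^q * g) (fun u => (u * (a*g)⁻¹)^q)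
      · intro b hb
        simp only [Finset.mem_coe, mem_filter, mem_univ, true_and] at hb ⊢
        exact hb
      · intro u hu
        simp only [Finset.mem_coe, mem_filter, mem_univ, true_and] at hu ⊢
        have he : a * (((u * (a*g)⁻¹)^q)^q) * g = u := by
          rw [hqq]; field_simp
        rw [he]; exact hu
      · intro b hb
        show ((a * b^q * g) * (a*g)⁻¹)^q = b
        rw [show (a * b^q * g) * (a*g)⁻¹ = b^q from by field_simp, hqq]
      · intro u hu
        dsimp only
        rw [hqq]; field_simp
    rw [hbij]
    exact trace_fiber hq2 hF φ hφ d hd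
  rw [h0, Finset.sum_congr rfl h1, Finset.sum_const, smul_eq_mul,
    Finset.card_erase_of_mem (mem_univ 0), Finset.card_univ, hF]
  by_cases hd0 : d = 0
  · rw [if_pos hd0, if_pos hd0]
    push_cast [show (1:ℕ) ≤ q^2 by nlinarith]
    ring
  · rw [if_neg hd0, if_neg hd0]
    push_cast [show (1:ℕ) ≤ q^2 by nlinarith]
    ring

end AuxLemmas

open Finset in
/-- For `n ≥ 4` and isotropic `x, y` with `⟨x,y⟩ ≠ 0`, the number of isotropic vectors `z`
with `⟨x,z⟩ = 0`, `z` not a multiple of `x`, `⟨z,y⟩ = 0` and `y` not a multiple of `z`,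
equals `|Φ(n−2,q)|`. -/
theorem intersection_number_TT_R
    (q : ℕ) (hq : IsPrimePow q) (n : ℕ) (hn : 4 ≤ n)
    (F : Type*) [Field F] [Fintype F] (hF : Fintype.card F = q ^ 2)
    (x y : Fin n → F) (hx : Isotropic q x) (hy : Isotropic q y)
    (hxy : herm q x y ≠ 0) :
    (Nat.card {z : Fin n → F // Isotropic q z ∧
        herm q x z = 0 ∧ (∀ c : F, z ≠ c • x) ∧
        herm q z y = 0 ∧ (∀ c : F, y ≠ c • z)} : ℤ) =
      ((q : ℤ) ^ (n - 2) - (-1) ^ (n - 2)) * ((q : ℤ) ^ (n - 3) - (-1) ^ (n - 3)) := by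
  classical
  obtain ⟨k, rfl⟩ : ∃ k, n = k + 4 := ⟨n - 4, by omega⟩
  obtain ⟨φ, hφ⟩ := exists_conj_hom hq hF
  have hq2 : 2 ≤ q := hq.two_le
  have hq0 : q ≠ 0 := by omega
  have hqq : ∀ a : F, (a^q)^q = a := pow_q_q hF
  have hconj : ∀ (u v : Fin (k+4) → F), (herm q u v)^q = herm q v u :=
    fun u v => herm_conj φ hφ hF u v
  obtain ⟨hx0, hxx⟩ := hx
  obtain ⟨hy0, hyy⟩ := hy
  set g := herm q x y with hgdef
  have hyx : herm q y x = g^q := (hconj x y).symm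
  have hgq0 : g^q ≠ 0 := pow_ne_zero _ hxy
  set ρ : (Fin (k+4) → F) → (Fin (k+4) → F) :=
    fun z => z - (herm q z y / g) • x - (herm q z x / g^q) • y with hρ
  -- values of herm on combinations
  have hval : ∀ (w : Fin (k+4) → F) (a b : F), herm q w x = 0 → herm q w y = 0 →
      herm q (w + a•x + b•y) x = b * g^q ∧ herm q (w + a•x + b•y) y = a * g := by
    intro w a b hwx hwy
    constructor
    · rw [herm_add_left, herm_add_left, herm_smul_left, herm_smul_left, hwx, hxx, hyx]; ring
    · rw [herm_add_left, herm_add_left, herm_smul_left, herm_smul_left, hwy, hyy, ← hgdef]; ring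
  have hρw : ∀ (w : Fin (k+4) → F) (a b : F), herm q w x = 0 → herm q w y = 0 →
      ρ (w + a•x + b•y) = w := by
    intro w a b hwx hwy
    obtain ⟨h1, h2⟩ := hval w a b hwx hwy
    simp only [hρ]
    rw [h1, h2, mul_div_cancel_right₀ _ hxy, mul_div_cancel_right₀ _ hgq0]
    abel
  have hdecomp : ∀ z : Fin (k+4) → F,
      z = ρ z + (herm q z y / g) • x + (herm q z x / g^q) • y := by
    intro z; simp only [hρ]; abel
  have hexpand : ∀ (w : Fin (k+4) → F) (a b : F), herm q w x = 0 → herm q w y = 0 →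
      herm q (w + a•x + b•y) (w + a•x + b•y)
        = herm q w w + (a * b^q * g + (a * b^q * g)^q) := by
    intro w a b hwx hwy
    have hxw : herm q x w = 0 := by rw [← hconj w x, hwx, zero_pow hq0]
    have hyw : herm q y w = 0 := by rw [← hconj w y, hwy, zero_pow hq0]
    have expand2 : (a * b^q * g)^q = a^q * b * g^q := by
      rw [mul_pow, mul_pow, hqq]
    simp only [herm_add_left, herm_add_right φ hφ, herm_smul_left, herm_smul_right,
      hwx, hwy, hxw, hyw, hxx, hyy, hyx, ← hgdef, expand2, mul_zero, add_zero, zero_add]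
    ring
  -- the perp space T
  set T := univ.filter (fun w : Fin (k+4) → F => herm q w x = 0 ∧ herm q w y = 0) with hT
  have hρT : ∀ z : Fin (k+4) → F, ρ z ∈ T := by
    intro z
    rw [hT, mem_filter]
    refine ⟨mem_univ _, ?_, ?_⟩
    · simp only [hρ]
      rw [herm_sub_left, herm_sub_left, herm_smul_left, herm_smul_left, hxx, hyx,
        mul_zero, sub_zero, div_mul_cancel₀ _ hgq0, sub_self]
    · simp only [hρ]
      rw [herm_sub_left, herm_sub_left, herm_smul_left, herm_smul_left, hyy, ← hgdef,
        mul_zero, sub_zero, div_mul_cancel₀ _ hxy, sub_self]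
  -- Eq1 : cardinality of T
  have eq1 : (q^2)^(k+4) = T.card * (q^2)^2 := by
    have hsum := card_eq_sum_card_fiberwise (s := (univ : Finset (Fin (k+4) → F))) (t := T)
      (f := ρ) (fun z _ => hρT z)
    have hfib : ∀ w ∈ T, ((univ : Finset (Fin (k+4) → F)).filter fun z => ρ z = w).card
        = (q^2)^2 := by
      intro w hw
      rw [hT, mem_filter] at hw
      obtain ⟨-, hwx, hwy⟩ := hw
      have hb : ((univ : Finset (Fin (k+4) → F)).filter fun z => ρ z = w).card
          = (univ : Finset (F × F)).card := by
        apply card_nbij' (fun z => (herm q z y / g, herm q z x / g^q))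
          (fun ab => w + ab.1 • x + ab.2 • y)
        · intro z _; exact mem_univ _
        · intro ab _
          simp only [Finset.mem_coe, mem_filter, mem_univ, true_and]
          exact hρw w ab.1 ab.2 hwx hwy
        · intro z hz
          simp only [Finset.mem_coe, mem_filter, mem_univ, true_and] at hz
          conv_rhs => rw [hdecomp z]
          rw [hz]
        · intro ab _
          obtain ⟨h1, h2⟩ := hval w ab.1 ab.2 hwx hwy
          simp only [h1, h2]
          rw [mul_div_cancel_right₀ _ hxy, mul_div_cancel_right₀ _ hgq0]
      rw [hb, card_univ, Fintype.card_prod, hF]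
      ring
    rw [Finset.sum_congr rfl hfib, Finset.sum_const, smul_eq_mul] at hsum
    rw [← hsum, card_univ, Fintype.card_fun, Fintype.card_fin, hF]
  -- Eq2 : fibration of the isotropic count over T
  have eq2 : (((univ : Finset (Fin (k+4) → F)).filter fun z => herm q z z = 0).card : ℤ)
      = T.card * ((q:ℤ)^3 - q) + (q:ℤ)^2 *
        ((univ.filter fun z : Fin (k+4) → F =>
          herm q z z = 0 ∧ herm q z x = 0 ∧ herm q z y = 0).card : ℤ) := by
    have hsum := card_eq_sum_card_fiberwise
      (s := (univ : Finset (Fin (k+4) → F)).filter fun z => herm q z z = 0) (t := T)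
      (f := ρ) (fun z _ => hρT z)
    have hfib : ∀ w ∈ T,
        (((((univ : Finset (Fin (k+4) → F)).filter fun z => herm q z z = 0)).filter
          fun z => ρ z = w).card : ℤ)
        = (q:ℤ)^3 - q + (if herm q w w = 0 then (q:ℤ)^2 else 0) := by
      intro w hw
      rw [hT, mem_filter] at hw
      obtain ⟨-, hwx, hwy⟩ := hw
      have hd : (-herm q w w)^q = -herm q w w := by
        rw [← hφ, map_neg, hφ, hconj w w]
      have hb : (((((univ : Finset (Fin (k+4) → F)).filter fun z => herm q z z = 0)).filter
            fun z => ρ z = w).card)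
          = ((univ : Finset (F × F)).filter fun ab : F × F =>
              ab.1 * ab.2^q * g + (ab.1 * ab.2^q * g)^q = -herm q w w).card := by
        apply card_nbij' (fun z => (herm q z y / g, herm q z x / g^q))
          (fun ab => w + ab.1 • x + ab.2 • y)
        · intro z hz
          simp only [Finset.mem_coe, mem_filter, mem_univ, true_and] at hz ⊢
          obtain ⟨hzz, hρz⟩ := hz
          have hz' : z = w + (herm q z y / g) • x + (herm q z x / g^q) • y := by
            conv_lhs => rw [hdecomp z]
            rw [hρz]
          rw [hz', hexpand w _ _ hwx hwy] at hzz
          linear_combination hzz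
        · intro ab hab
          simp only [Finset.mem_coe, mem_filter, mem_univ, true_and] at hab ⊢
          constructor
          · rw [hexpand w ab.1 ab.2 hwx hwy]
            linear_combination hab
          · exact hρw w ab.1 ab.2 hwx hwy
        · intro z hz
          simp only [Finset.mem_coe, mem_filter, mem_univ, true_and] at hz
          conv_rhs => rw [hdecomp z]
          rw [hz.2]
        · intro ab _
          obtain ⟨h1, h2⟩ := hval w ab.1 ab.2 hwx hwy
          simp only [h1, h2]
          rw [mul_div_cancel_right₀ _ hxy, mul_div_cancel_right₀ _ hgq0]
      rw [hb, pairs_card hq2 hF φ hφ g hxy (-herm q w w) hd]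
      congr 1
      simp [neg_eq_zero]
    have hsum' := congrArg (Nat.cast : ℕ → ℤ) hsum
    push_cast at hsum'
    rw [Finset.sum_congr rfl hfib] at hsum'
    rw [hsum', Finset.sum_add_distrib, Finset.sum_const, ← Finset.sum_filter]
    have hfilt : T.filter (fun w => herm q w w = 0)
        = univ.filter fun z : Fin (k+4) → F =>
            herm q z z = 0 ∧ herm q z x = 0 ∧ herm q z y = 0 := by
      ext z
      simp only [hT, mem_filter, mem_univ, true_and]
      tauto
    rw [hfilt, Finset.sum_const]
    push_cast
    ring
  -- Eq3 : global isotropic count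
  have eq3 : (((univ : Finset (Fin (k+4) → F)).filter fun z => herm q z z = 0).card : ℤ)
      = (q:ℤ)^(2*(k+3)+1) + (-1)^(k+3+1) * (q:ℤ)^(k+3) * ((q:ℤ)-1) := by
    have := count_herm hq2 hF φ hφ (k+3) 0 (zero_pow hq0)
    rw [if_pos rfl] at this
    exact this
  -- solve for B
  set B := (univ.filter fun z : Fin (k+4) → F =>
    herm q z z = 0 ∧ herm q z x = 0 ∧ herm q z y = 0).card with hBdef
  have eq1' : (T.card : ℤ) * (q:ℤ)^4 = (q:ℤ)^(2*k+8) := by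
    have := congrArg (Nat.cast : ℕ → ℤ) eq1
    push_cast at this
    rw [show ((q:ℤ)^2)^(k+4) = (q:ℤ)^(2*k+8) by rw [← pow_mul]; ring_nf] at this
    rw [show ((q:ℤ)^2)^2 = (q:ℤ)^4 by ring] at this
    linarith
  have hBval : (B : ℤ) = (q:ℤ)^(2*k+3) + (-1)^k * (q:ℤ)^(k+1) * ((q:ℤ)-1) := by
    have hqz : (q:ℤ) ≠ 0 := Nat.cast_ne_zero.mpr hq0
    have hcancel : (q:ℤ)^6 * B
        = (q:ℤ)^6 * ((q:ℤ)^(2*k+3) + (-1)^k * (q:ℤ)^(k+1) * ((q:ℤ)-1)) := by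
      linear_combination (-(q:ℤ)^4) * eq2 + (q:ℤ)^4 * eq3 - ((q:ℤ)^3 - (q:ℤ)) * eq1'
    exact mul_left_cancel₀ (pow_ne_zero 6 hqz) hcancel
  -- identify the solution set
  have h0mem : (0 : Fin (k+4) → F) ∈ univ.filter (fun z : Fin (k+4) → F =>
      herm q z z = 0 ∧ herm q z x = 0 ∧ herm q z y = 0) := by
    rw [Finset.mem_filter]
    simp [herm, zero_pow hq0]
  have hset : (univ.filter fun z : Fin (k+4) → F => Isotropic q z ∧
        herm q x z = 0 ∧ (∀ c : F, z ≠ c • x) ∧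
        herm q z y = 0 ∧ (∀ c : F, y ≠ c • z))
      = (univ.filter fun z : Fin (k+4) → F =>
          herm q z z = 0 ∧ herm q z x = 0 ∧ herm q z y = 0).erase 0 := by
    ext z
    simp only [mem_filter, mem_univ, true_and, mem_erase]
    constructor
    · rintro ⟨⟨hz0, hzz⟩, hxz, hcx, hzy, hcy⟩
      refine ⟨hz0, hzz, ?_, hzy⟩
      calc herm q z x = ((herm q z x)^q)^q := (hqq _).symm
        _ = 0 := by rw [hconj z x, hxz, zero_pow hq0]
    · rintro ⟨hz0, hzz, hzx, hzy⟩
      have hxz : herm q x z = 0 := by rw [← hconj z x, hzx, zero_pow hq0]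
      refine ⟨⟨hz0, hzz⟩, hxz, ?_, hzy, ?_⟩
      · intro c hzc
        apply hz0
        have h5 : c * herm q x y = 0 := by
          rw [← herm_smul_left, ← hzc]; exact hzy
        have hc0 : c = 0 := by
          rcases mul_eq_zero.mp h5 with h | h
          · exact h
          · exact absurd h hxy
        rw [hzc, hc0, zero_smul]
      · intro c hyc
        apply hxy
        rw [hgdef, hyc, herm_smul_right, hxz, mul_zero]
  -- final computation
  have hB1 : 1 ≤ B := Finset.card_pos.mpr ⟨0, h0mem⟩
  have hcard : (Nat.card {z : Fin (k+4) → F // Isotropic q z ∧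
      herm q x z = 0 ∧ (∀ c : F, z ≠ c • x) ∧
      herm q z y = 0 ∧ (∀ c : F, y ≠ c • z)} : ℤ) = (B : ℤ) - 1 := by
    rw [Nat.card_eq_fintype_card, Fintype.card_subtype, hset, card_erase_of_mem h0mem]
    rw [← hBdef, Nat.cast_sub hB1, Nat.cast_one]
  rw [hcard, hBval]
  have e2 : k + 4 - 2 = k + 2 := by omega
  have e3 : k + 4 - 3 = k + 1 := by omega
  rw [e2, e3]
  have he : (-1:ℤ)^k * (-1:ℤ)^k = 1 := by
    rw [← pow_add, show k + k = 2*k from by ring, pow_mul]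
    norm_num
  linear_combination he
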